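/- Under Condition A, on the high-probability event (in particular F_{−y_i}(W_{−y_i}^k, x_i) ≤ 0.5 for all i and ‖ξ_i‖ ≤ 2σ_ξ√d), for all 0 ≤ k ≤ T*: ‖∇L_S(W^k)‖² = O(max{‖μ‖², σ_ξ² d}) · L_S(W^k), where ‖∇L_S(W^k)‖ denotes the Frobenius norm of the full gradient over all weights w_{j,r}. -/

import Mathlib

noncomputable section
open MeasureTheory ProbabilityTheory Real
open scoped ENNReal NNReal RealInnerProductSpace BigOperators Classical

/-- The logistic loss `ℓ(z) = log(1 + exp(−z))`. -/
def logloss (z : ℝ) : ℝ := Real.log (1 + Real.exp (-z))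

/-- The derivative of the logistic loss, `ℓ'(z) = −(1 + exp z)⁻¹`. -/
def logloss' (z : ℝ) : ℝ := -(1 + Real.exp z)⁻¹

/-- The ±1 value of a Boolean class index: `true ↦ +1`, `false ↦ −1`. -/
def jval (j : Bool) : ℝ := if j then 1 else -1

/-- The Boolean class index of a ±1 label. -/
def bsel (t : ℝ) : Bool := if t = 1 then true else false

/-- The signal patch of a sample with label `t ∈ {±1}`:  `μ₁` if `t = 1`, else `μ₋₁`. -/
def sig {d : ℕ} (μP μM : EuclideanSpace ℝ (Fin d)) (t : ℝ) : EuclideanSpace ℝ (Fin d) :=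
  if t = 1 then μP else μM

/-- One branch `F_j` of the classifier:
`F_j(W_j, x) = (1/m) ∑_r (⟨w_{j,r}, x⁽¹⁾⟩² + ⟨w_{j,r}, x⁽²⁾⟩²)`. -/
def Fnet {d : ℕ} (m : ℕ) (W : Fin m → EuclideanSpace ℝ (Fin d))
    (x1 x2 : EuclideanSpace ℝ (Fin d)) : ℝ :=
  (m : ℝ)⁻¹ * ∑ r, (⟪W r, x1⟫ ^ 2 + ⟪W r, x2⟫ ^ 2)

/-- The classifier `f(W, x) = F_{+1}(W_{+1}, x) − F_{−1}(W_{−1}, x)`. -/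
def fnet {d : ℕ} (m : ℕ) (W : Bool → Fin m → EuclideanSpace ℝ (Fin d))
    (x1 x2 : EuclideanSpace ℝ (Fin d)) : ℝ :=
  Fnet m (W true) x1 x2 - Fnet m (W false) x1 x2

/-- The empirical logistic loss `L_S(W) = (1/n) ∑_i ℓ(y_i f(W, x_i))` on the training data
`x_i = (μ_{y_i}, ξ_i)`. -/
def LS {d : ℕ} (n m : ℕ) (μP μM : EuclideanSpace ℝ (Fin d)) (y : Fin n → ℝ)
    (ξ : Fin n → EuclideanSpace ℝ (Fin d))
    (W : Bool → Fin m → EuclideanSpace ℝ (Fin d)) : ℝ :=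
  (n : ℝ)⁻¹ * ∑ i, logloss (y i * fnet m W (sig μP μM (y i)) (ξ i))

/-- The gradient of the empirical loss with respect to the neuron `w_{j,r}`:
`∇_{w_{j,r}} L_S(W) = (1/(nm)) ∑_i ℓ'_i · j y_i · (⟨w_{j,r}, x_i⁽¹⁾⟩ x_i⁽¹⁾ + ⟨w_{j,r}, ξ_i⟩ ξ_i)`. -/
def gradLS {d : ℕ} (n m : ℕ) (μP μM : EuclideanSpace ℝ (Fin d)) (y : Fin n → ℝ)
    (ξ : Fin n → EuclideanSpace ℝ (Fin d))
    (W : Bool → Fin m → EuclideanSpace ℝ (Fin d)) (j : Bool) (r : Fin m) :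
    EuclideanSpace ℝ (Fin d) :=
  ((n : ℝ) * m)⁻¹ •
    ∑ i, (logloss' (y i * fnet m W (sig μP μM (y i)) (ξ i)) * jval j * y i) •
      (⟪W j r, sig μP μM (y i)⟫ • sig μP μM (y i) + ⟪W j r, ξ i⟫ • ξ i)

/-- The gradient-descent trajectory `W⁰ = W0`, `w_{j,r}^{k+1} = w_{j,r}^k − η ∇_{w_{j,r}} L_S(W^k)`. -/
def gd {d : ℕ} (n m : ℕ) (μP μM : EuclideanSpace ℝ (Fin d)) (y : Fin n → ℝ)
    (ξ : Fin n → EuclideanSpace ℝ (Fin d)) (η : ℝ)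
    (W0 : Bool → Fin m → EuclideanSpace ℝ (Fin d)) :
    ℕ → Bool → Fin m → EuclideanSpace ℝ (Fin d)
  | 0 => W0
  | k + 1 => fun j r =>
      gd n m μP μM y ξ η W0 k j r - η • gradLS n m μP μM y ξ (gd n m μP μM y ξ η W0 k) j r

/-- Polylogarithmic factor in all problem parameters (hidden by the tilde notations). -/
def plog (n m d : ℕ) (δ : ℝ) : ℝ := max 1 (Real.log ((n : ℝ) * m * d / δ))

/-- Condition A (conditions on the parameters for the classification results), with hidden
universal constant `C`. -/
def ConditionA (C : ℝ) (d n m : ℕ) (μnorm σξ σ0 η δ : ℝ) : Prop :=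
  -- d = Ω̃(max{n²mσ_ξ⁻¹‖μ‖, n⁴m})
  C * plog n m d δ ^ C * max ((n : ℝ) ^ 2 * m * σξ⁻¹ * μnorm) ((n : ℝ) ^ 4 * m) ≤ (d : ℝ) ∧
  -- m = Ω(log(n/δ)), n = Ω(log(m/δ))
  C * Real.log ((n : ℝ) / δ) ≤ (m : ℝ) ∧
  C * Real.log ((m : ℝ) / δ) ≤ (n : ℝ) ∧
  -- Ω̃(n²mσ_ξ⁻¹d⁻¹) ≤ σ₀ ≤ Õ(min{‖μ‖⁻¹, σ_ξ⁻¹d^{−1/2}})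
  C * plog n m d δ ^ C * ((n : ℝ) ^ 2 * m * σξ⁻¹ / d) ≤ σ0 ∧
  σ0 ≤ (C * plog n m d δ ^ C)⁻¹ * min μnorm⁻¹ (σξ⁻¹ / Real.sqrt d) ∧
  -- η ≤ Õ(min{m‖μ‖⁻², nmσ₀σ_ξ⁻¹d^{−1/2}, nmσ_ξ⁻²d⁻¹})
  η ≤ (C * plog n m d δ ^ C)⁻¹ *
    min ((m : ℝ) / μnorm ^ 2)
      (min ((n : ℝ) * m * σ0 / (σξ * Real.sqrt d)) ((n : ℝ) * m / (σξ ^ 2 * d)))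

/-- The types of the members of the joint family of random variables:
the `n` labels (real valued), the `n` noise patches and the `2m` initial weights (ℝ^d valued). -/
abbrev IdxT (d n m : ℕ) : Fin n ⊕ (Fin n ⊕ Bool × Fin m) → Type :=
  Sum.elim (fun _ => ℝ) (fun _ => EuclideanSpace ℝ (Fin d))

/-- Measurable-space structures on the members of the joint family. -/
def idxMS (d n m : ℕ) : (k : Fin n ⊕ (Fin n ⊕ Bool × Fin m)) → MeasurableSpace (IdxT d n m k)
  | Sum.inl _ => (inferInstance : MeasurableSpace ℝ)
  | Sum.inr _ => (inferInstance : MeasurableSpace (EuclideanSpace ℝ (Fin d)))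

/-- The joint family of random variables: labels, noise patches, initial weights. -/
def allRV {d n m : ℕ} {Ω : Type} (y : Fin n → Ω → ℝ)
    (ξ : Fin n → Ω → EuclideanSpace ℝ (Fin d))
    (w0 : Bool → Fin m → Ω → EuclideanSpace ℝ (Fin d)) :
    (k : Fin n ⊕ (Fin n ⊕ Bool × Fin m)) → Ω → IdxT d n m k
  | Sum.inl i => y i
  | Sum.inr (Sum.inl i) => ξ i
  | Sum.inr (Sum.inr p) => w0 p.1 p.2

/-!
STATEMENT 13 (gradient norm upper bound): Under Condition A, on the high-probability event
(in particular F_{−y_i}(W_{−y_i}^k, x_i) ≤ 0.5 for all i and ‖ξ_i‖ ≤ 2σ_ξ√d), for all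
0 ≤ k ≤ T*: ‖∇L_S(W^k)‖² = O(max{‖μ‖², σ_ξ² d}) · L_S(W^k), where ‖∇L_S(W^k)‖ is the
Frobenius norm of the full gradient over all weights w_{j,r}.
-/

/-!
Each neuron's gradient is `(nm)⁻¹ ∑ᵢ ℓ'ᵢ (±1) (⟨w, xᵢ⁽¹⁾⟩ xᵢ⁽¹⁾ + ⟨w, ξᵢ⟩ ξᵢ)`. Both patches have
squared norm at most `4M`, `M = max{‖μ‖², σ_ξ² d}`, so Cauchy–Schwarz bounds its squared norm by
`8M/(n m²) ∑ᵢ ℓ'ᵢ² (⟨w, xᵢ⁽¹⁾⟩² + ⟨w, ξᵢ⟩²)`. Summed over all neurons, the inner products add up to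
`m (F_{+1} + F_{-1})(xᵢ) ≤ m (yᵢ f(xᵢ) + 1)`, since the wrong-class branch is at most `1/2`.
Finally `ℓ'(z)² (z + 1) ≤ ℓ(z)`, so the total is at most `8M/m · L_S ≤ 8M · L_S`.
-/

theorem logloss_nonneg (z : ℝ) : 0 ≤ logloss z :=
  Real.log_nonneg (by linarith [Real.exp_pos (-z)])

theorem inv_one_add_exp_le_logloss (z : ℝ) : (1 + Real.exp z)⁻¹ ≤ logloss z := by
  have hpos : 0 < 1 + Real.exp (-z) := by positivity
  have hlog : 1 - (1 + Real.exp (-z))⁻¹ ≤ logloss z := by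
    have := Real.log_le_sub_one_of_pos (inv_pos.mpr hpos)
    rw [Real.log_inv] at this
    unfold logloss
    linarith
  calc (1 + Real.exp z)⁻¹ = 1 - (1 + Real.exp (-z))⁻¹ := by
        rw [Real.exp_neg]; field_simp; ring
    _ ≤ logloss z := hlog

/-- With `p = (1 + eᶻ)⁻¹ = |ℓ'(z)|`, this is `p² (z + 1) ≤ p² eᶻ ≤ p ≤ ℓ(z)`. -/
theorem logloss'_sq_mul_add_one_le (z : ℝ) : logloss' z ^ 2 * (z + 1) ≤ logloss z := by
  set p := (1 + Real.exp z)⁻¹ with hp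
  calc logloss' z ^ 2 * (z + 1) = p ^ 2 * (z + 1) := by rw [logloss', neg_sq]
    _ ≤ p ^ 2 * (1 + Real.exp z) :=
        mul_le_mul_of_nonneg_left (by linarith [Real.add_one_le_exp z]) (sq_nonneg p)
    _ = p := by rw [hp]; field_simp
    _ ≤ logloss z := inv_one_add_exp_le_logloss z

theorem norm_sum_sq_le_card_mul {ι E : Type*} [SeminormedAddCommGroup E] (s : Finset ι)
    (f : ι → E) : ‖∑ i ∈ s, f i‖ ^ 2 ≤ s.card * ∑ i ∈ s, ‖f i‖ ^ 2 :=
  (pow_le_pow_left₀ (norm_nonneg _) (norm_sum_le s f) 2).trans sq_sum_le_card_mul_sum_sq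

theorem norm_inner_smul_add_inner_smul_sq_le {E : Type*} [NormedAddCommGroup E]
    [InnerProductSpace ℝ E] {B : ℝ} {a b : E} (ha : ‖a‖ ^ 2 ≤ B) (hb : ‖b‖ ^ 2 ≤ B) (w : E) :
    ‖⟪w, a⟫ • a + ⟪w, b⟫ • b‖ ^ 2 ≤ 2 * B * (⟪w, a⟫ ^ 2 + ⟪w, b⟫ ^ 2) := by
  have hsum := norm_sum_sq_le_card_mul Finset.univ ![⟪w, a⟫ • a, ⟪w, b⟫ • b]
  simp only [Fin.sum_univ_two, Finset.card_univ, Fintype.card_fin, Matrix.cons_val_zero,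
    Matrix.cons_val_one, norm_smul, mul_pow, Real.norm_eq_abs, sq_abs] at hsum
  have h1 := mul_le_mul_of_nonneg_left ha (sq_nonneg ⟪w, a⟫)
  have h2 := mul_le_mul_of_nonneg_left hb (sq_nonneg ⟪w, b⟫)
  push_cast at hsum
  nlinarith

theorem jval_sq (j : Bool) : jval j ^ 2 = 1 := by
  cases j <;> norm_num [jval]

theorem norm_sig {d : ℕ} {μP μM : EuclideanSpace ℝ (Fin d)} (hμ : ‖μP‖ = ‖μM‖) (t : ℝ) :
    ‖sig μP μM t‖ = ‖μP‖ := by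
  unfold sig; split_ifs <;> simp [hμ]

theorem sum_sum_inner_sq_eq {d m : ℕ} (hm : m ≠ 0) (W : Bool → Fin m → EuclideanSpace ℝ (Fin d))
    (a b : EuclideanSpace ℝ (Fin d)) :
    ∑ j : Bool, ∑ r, (⟪W j r, a⟫ ^ 2 + ⟪W j r, b⟫ ^ 2) =
      m * (Fnet m (W true) a b + Fnet m (W false) a b) := by
  rw [Fintype.sum_bool]
  unfold Fnet
  field_simp

/-- `t f = F_{+1} + F_{-1} - 2 F_{-t}` for `t = ±1`. -/
theorem Fnet_add_Fnet_le {d m : ℕ} {W : Bool → Fin m → EuclideanSpace ℝ (Fin d)}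
    {a b : EuclideanSpace ℝ (Fin d)} {t : ℝ} (ht : t = 1 ∨ t = -1)
    (hF : Fnet m (W (!bsel t)) a b ≤ 1 / 2) :
    Fnet m (W true) a b + Fnet m (W false) a b ≤ t * fnet m W a b + 1 := by
  unfold fnet
  rcases ht with rfl | rfl
  · norm_num [bsel] at hF; linarith
  · norm_num [bsel] at hF; linarith

theorem logloss'_sq_mul_sum_sum_inner_sq_le {d m : ℕ} (hm : m ≠ 0)
    {W : Bool → Fin m → EuclideanSpace ℝ (Fin d)} {a b : EuclideanSpace ℝ (Fin d)} {t : ℝ}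
    (ht : t = 1 ∨ t = -1) (hF : Fnet m (W (!bsel t)) a b ≤ 1 / 2) :
    logloss' (t * fnet m W a b) ^ 2 * ∑ j : Bool, ∑ r, (⟪W j r, a⟫ ^ 2 + ⟪W j r, b⟫ ^ 2) ≤
      m * logloss (t * fnet m W a b) := by
  rw [sum_sum_inner_sq_eq hm, mul_left_comm]
  gcongr
  calc logloss' (t * fnet m W a b) ^ 2 * (Fnet m (W true) a b + Fnet m (W false) a b)
      ≤ logloss' (t * fnet m W a b) ^ 2 * (t * fnet m W a b + 1) :=
        mul_le_mul_of_nonneg_left (Fnet_add_Fnet_le ht hF) (sq_nonneg _)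
    _ ≤ logloss (t * fnet m W a b) := logloss'_sq_mul_add_one_le _

section Gradient

variable {d n m : ℕ} {μP μM : EuclideanSpace ℝ (Fin d)} {y : Fin n → ℝ}
  {ξ : Fin n → EuclideanSpace ℝ (Fin d)} {W : Bool → Fin m → EuclideanSpace ℝ (Fin d)} {B : ℝ}

theorem LS_nonneg : 0 ≤ LS n m μP μM y ξ W :=
  mul_nonneg (by positivity) (Finset.sum_nonneg fun _ _ => logloss_nonneg _)

theorem norm_gradLS_sq_le (hy : ∀ i, y i = 1 ∨ y i = -1)
    (hsig : ∀ i, ‖sig μP μM (y i)‖ ^ 2 ≤ B) (hξ : ∀ i, ‖ξ i‖ ^ 2 ≤ B) (j : Bool) (r : Fin m) :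
    ‖gradLS n m μP μM y ξ W j r‖ ^ 2 ≤
      ((n : ℝ) * m)⁻¹ ^ 2 * (n * ∑ i, 2 * B *
        (logloss' (y i * fnet m W (sig μP μM (y i)) (ξ i)) ^ 2 *
          (⟪W j r, sig μP μM (y i)⟫ ^ 2 + ⟪W j r, ξ i⟫ ^ 2))) := by
  have hy_sq : ∀ i, y i ^ 2 = 1 := fun i => by rcases hy i with h | h <;> simp [h]
  rw [gradLS, norm_smul, mul_pow, Real.norm_eq_abs, sq_abs]
  refine mul_le_mul_of_nonneg_left ((norm_sum_sq_le_card_mul _ _).trans ?_) (by positivity)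
  rw [Finset.card_univ, Fintype.card_fin]
  gcongr with i
  rw [norm_smul, mul_pow, Real.norm_eq_abs, sq_abs, mul_pow, mul_pow, jval_sq, hy_sq,
    mul_one, mul_one, mul_left_comm]
  gcongr
  exact norm_inner_smul_add_inner_smul_sq_le (hsig i) (hξ i) _

theorem sum_norm_gradLS_sq_le (hm : 0 < m) (hy : ∀ i, y i = 1 ∨ y i = -1)
    (hsig : ∀ i, ‖sig μP μM (y i)‖ ^ 2 ≤ B) (hξ : ∀ i, ‖ξ i‖ ^ 2 ≤ B)
    (hF : ∀ i, Fnet m (W (!bsel (y i))) (sig μP μM (y i)) (ξ i) ≤ 1 / 2) :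
    ∑ j : Bool, ∑ r, ‖gradLS n m μP μM y ξ W j r‖ ^ 2 ≤ 2 * B / m * LS n m μP μM y ξ W := by
  calc ∑ j : Bool, ∑ r, ‖gradLS n m μP μM y ξ W j r‖ ^ 2
      ≤ ∑ j : Bool, ∑ r, ((n : ℝ) * m)⁻¹ ^ 2 * (n * ∑ i, 2 * B *
          (logloss' (y i * fnet m W (sig μP μM (y i)) (ξ i)) ^ 2 *
            (⟪W j r, sig μP μM (y i)⟫ ^ 2 + ⟪W j r, ξ i⟫ ^ 2))) := by
        gcongr with j _ r _; exact norm_gradLS_sq_le hy hsig hξ j r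
    _ = ((n : ℝ) * m)⁻¹ ^ 2 * (n * ∑ i, 2 * B *
          (logloss' (y i * fnet m W (sig μP μM (y i)) (ξ i)) ^ 2 *
            ∑ j : Bool, ∑ r, (⟪W j r, sig μP μM (y i)⟫ ^ 2 + ⟪W j r, ξ i⟫ ^ 2))) := by
        simp only [Finset.mul_sum]
        conv_rhs => rw [Finset.sum_comm]
        exact Finset.sum_congr rfl fun _ _ => Finset.sum_comm
    _ ≤ ((n : ℝ) * m)⁻¹ ^ 2 * (n * ∑ i, 2 * B *
          (m * logloss (y i * fnet m W (sig μP μM (y i)) (ξ i)))) := by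
        refine mul_le_mul_of_nonneg_left (mul_le_mul_of_nonneg_left
          (Finset.sum_le_sum fun i _ => ?_) (by positivity)) (by positivity)
        exact mul_le_mul_of_nonneg_left (logloss'_sq_mul_sum_sum_inner_sq_le hm.ne' (hy i) (hF i))
          (by linarith [(sq_nonneg ‖ξ i‖).trans (hξ i)])
    _ = 2 * B / m * LS n m μP μM y ξ W := by
        rw [LS, ← Finset.mul_sum, ← Finset.mul_sum]
        field_simp

end Gradient

theorem gradient_norm_bound :
    ∃ C : ℝ, 1 ≤ C ∧
      ∀ (d n m : ℕ) (μP μM : EuclideanSpace ℝ (Fin d)) (σξ σ0 η δ : ℝ)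
        (y : Fin n → ℝ) (ξ : Fin n → EuclideanSpace ℝ (Fin d))
        (W0 : Bool → Fin m → EuclideanSpace ℝ (Fin d)) (Tstar : ℕ),
        0 < d → 0 < n → 0 < m → 0 < σξ → 0 < σ0 → 0 < η → 0 < δ → δ < 1 →
        ⟪μP, μM⟫ = 0 → ‖μP‖ = ‖μM‖ → μP ≠ 0 →
        -- the labels take values in {±1}
        (∀ i, y i = 1 ∨ y i = -1) →
        ConditionA C d n m ‖μP‖ σξ σ0 η δ →
        -- on the high-probability event: ‖ξ_i‖ ≤ 2σ_ξ√d ...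
        (∀ i, ‖ξ i‖ ≤ 2 * σξ * Real.sqrt d) →
        -- ... and F_{−y_i}(W_{−y_i}^k, x_i) ≤ 0.5 for all i and all k ≤ T*
        (∀ k ≤ Tstar, ∀ i,
          Fnet m (gd n m μP μM y ξ η W0 k (!bsel (y i))) (sig μP μM (y i)) (ξ i) ≤ 0.5) →
        ∀ k ≤ Tstar,
          ∑ j : Bool, ∑ r : Fin m, ‖gradLS n m μP μM y ξ (gd n m μP μM y ξ η W0 k) j r‖ ^ 2 ≤
            C * max (‖μP‖ ^ 2) (σξ ^ 2 * d) *
              LS n m μP μM y ξ (gd n m μP μM y ξ η W0 k) := by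
  refine ⟨8, by norm_num, ?_⟩
  intro d n m μP μM σξ σ0 η δ y ξ W0 Tstar _ _ hm _ _ _ _ _ _ hμ _ hy _ hξ hF k hk
  set M := max (‖μP‖ ^ 2) (σξ ^ 2 * d)
  have hsig : ∀ i, ‖sig μP μM (y i)‖ ^ 2 ≤ 4 * M := fun i => by
    rw [norm_sig hμ]; linarith [le_max_left (‖μP‖ ^ 2) (σξ ^ 2 * d), sq_nonneg ‖μP‖]
  have hξ_sq : ∀ i, ‖ξ i‖ ^ 2 ≤ 4 * M := fun i => calc
    ‖ξ i‖ ^ 2 ≤ (2 * σξ * Real.sqrt d) ^ 2 := pow_le_pow_left₀ (norm_nonneg _) (hξ i) 2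
    _ = 4 * (σξ ^ 2 * d) := by rw [mul_pow, Real.sq_sqrt (Nat.cast_nonneg d)]; ring
    _ ≤ 4 * M := by gcongr; exact le_max_right _ _
  calc _ ≤ 2 * (4 * M) / m * LS n m μP μM y ξ (gd n m μP μM y ξ η W0 k) :=
        sum_norm_gradLS_sq_le hm hy hsig hξ_sq fun i => (hF k hk i).trans_eq (by norm_num)
    _ ≤ 8 * M * LS n m μP μM y ξ (gd n m μP μM y ξ η W0 k) := by
        have hM : 0 ≤ M := (sq_nonneg _).trans (le_max_left _ _)
        have hm1 : (1 : ℝ) ≤ m := by exact_mod_cast hm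
        gcongr
        · exact LS_nonneg
        · rw [div_le_iff₀ (by positivity)]; nlinarith
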